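/- If the (k,ℓ)-tensor f over ℝ² is a linear combination f = Σ_{h=0}^{H} a_h f_{H,h} of the basis tensors f_{H,h} = (⊗^h dx¹ ⊗_s ⊗^{k-h}dx²) ⊗ (⊗^{ℓ-(H-h)}dx¹ ⊗_s ⊗^{H-h}dx²) for a fixed H ≤ min{k,ℓ}, then Sym(Af) = 0 if and only if Σ_{h=0}^{H} (-1)^h a_h = 0. -/

import Mathlib

open scoped BigOperators
open MeasureTheory

namespace MRT

/-- A multi-index with `n` slots, each ranging over the two coordinate indices of `ℝ²`
(`0` stands for the index "1", `1` stands for the index "2"). -/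
abbrev Idx (n : ℕ) := Fin n → Fin 2

/-- A `(k,ℓ)`-tensor over `ℝ²`: a function of `k` first-group and `ℓ` second-group indices. -/
abbrev Tens (k l : ℕ) := Idx k → Idx l → ℝ

/-- A tensor with `n` (fully interchangeable) slots. -/
abbrev Full (n : ℕ) := Idx n → ℝ

/-- The index swap `δ` exchanging the two coordinate indices. -/
def dswap : Fin 2 → Fin 2 := fun i => 1 - i

/-- `N J` : the number of entries of `J` equal to the first index ("1"). -/
def NJ {n : ℕ} (J : Idx n) : ℕ := (Finset.univ.filter fun j => J j = 0).card

/-- The operator `A`: `(Af)(I,J) = (-1)^(ℓ - N(J)) f(I, δ(J))`. -/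
def opA {k l : ℕ} (f : Tens k l) : Tens k l :=
  fun I J => (-1 : ℝ) ^ (l - NJ J) * f I (dswap ∘ J)

/-- Full symmetrization (average over all permutations of the `n` slots). -/
noncomputable def Sym {n : ℕ} (h : Full n) : Full n :=
  fun I => ((Nat.factorial n : ℝ))⁻¹ * ∑ σ : Equiv.Perm (Fin n), h (I ∘ σ)

/-- Symmetrization over the first index group only. -/
noncomputable def symK {k l : ℕ} (f : Tens k l) : Tens k l :=
  fun I J => ((Nat.factorial k : ℝ))⁻¹ * ∑ σ : Equiv.Perm (Fin k), f (I ∘ σ) J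

/-- Symmetrization over the second index group only. -/
noncomputable def symL {k l : ℕ} (f : Tens k l) : Tens k l :=
  fun I J => ((Nat.factorial l : ℝ))⁻¹ * ∑ σ : Equiv.Perm (Fin l), f I (J ∘ σ)

/-- View a `(k,ℓ)`-tensor as a `(k+ℓ)`-tensor. -/
def toFull {k l : ℕ} (f : Tens k l) : Full (k + l) :=
  fun I => f (fun i => I (Fin.castAdd l i)) (fun j => I (Fin.natAdd k j))

/-- View a `(k+ℓ)`-tensor as a `(k,ℓ)`-tensor. -/
def fromFull {k l : ℕ} (h : Full (k + l)) : Tens k l :=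
  fun I J => h (Fin.append I J)

/-- The operator `λ` : symmetrized multiplication with the Euclidean metric `g = δ`. -/
noncomputable def lam {k l : ℕ} (w : Tens k l) : Tens (k + 1) (l + 1) :=
  symK (symL (fun I J =>
    (if I 0 = J 0 then (1 : ℝ) else 0) * w (Fin.tail I) (Fin.tail J)))

/-- The contraction `v^I = v_{i₁} ⋯ v_{i_n}`. -/
def vpow {n : ℕ} (v : Fin 2 → ℝ) (I : Idx n) : ℝ := ∏ i, v (I i)

/-- The rotation `σ(v) = (v₂, -v₁)`. -/
def rot (v : Fin 2 → ℝ) : Fin 2 → ℝ := ![v 1, -v 0]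

/-- Euclidean dot product on `ℝ²`. -/
def dot (x v : Fin 2 → ℝ) : ℝ := x 0 * v 0 + x 1 * v 1

/-- Symmetry in the first `k` and in the last `ℓ` index slots. -/
def SymmIn {k l : ℕ} (f : Tens k l) : Prop :=
  ∀ (I : Idx k) (J : Idx l) (σ : Equiv.Perm (Fin k)) (τ : Equiv.Perm (Fin l)),
    f (I ∘ σ) (J ∘ τ) = f I J

/-- Smoothness of a tensor field on `ℝ²`, componentwise. -/
def SmoothT {k l : ℕ} (u : (Fin 2 → ℝ) → Tens k l) : Prop :=
  ∀ I J, ContDiff ℝ (⊤ : ℕ∞) fun x => u x I J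

/-- The operator `d'` for the flat connection: symmetrized partial derivative placed in the
first index group. -/
noncomputable def dprime {k l : ℕ} (u : (Fin 2 → ℝ) → Tens k l) :
    (Fin 2 → ℝ) → Tens (k + 1) l :=
  fun x => symK fun I J =>
    fderiv ℝ (fun y => u y (Fin.tail I) J) x (Pi.single (I 0) 1)

/-- The full (flat) covariant derivative of a field of `n`-tensors, derivative slot first. -/
noncomputable def dfull {n : ℕ} (h : (Fin 2 → ℝ) → Full n) :
    (Fin 2 → ℝ) → Full (n + 1) :=
  fun x I => fderiv ℝ (fun y => h y (Fin.tail I)) x (Pi.single (I 0) 1)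

/-- The inner derivative `dˢ`: full symmetrization of the derivative, viewed as a
`(k+1,ℓ)`-tensor field. -/
noncomputable def dsym {k l : ℕ} (u : (Fin 2 → ℝ) → Tens k l) :
    (Fin 2 → ℝ) → Tens (k + 1) l :=
  fun x I J =>
    Sym (dfull (fun y => toFull (u y)) x) (Fin.cons (I 0) (Fin.append (Fin.tail I) J))

/-- The symmetric tensor `(⊗^m dx¹) ⊗_s (⊗^(n-m) dx²)` (averaged symmetrization of the
elementary tensor product with `m` copies of `dx¹` followed by copies of `dx²`). -/
noncomputable def E (n m : ℕ) : Full n :=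
  Sym fun I => if ∀ i : Fin n, (I i = 0 ↔ (i : ℕ) < m) then 1 else 0

/-- Membership in the closed unit disc. -/
def inDisc (x : Fin 2 → ℝ) : Prop := x 0 ^ 2 + x 1 ^ 2 ≤ 1

/-- Membership in the unit circle (the boundary of the disc). -/
def onSphere (x : Fin 2 → ℝ) : Prop := x 0 ^ 2 + x 1 ^ 2 = 1

/-- Unit vectors of `ℝ²`. -/
def unitVec (v : Fin 2 → ℝ) : Prop := v 0 ^ 2 + v 1 ^ 2 = 1

/-- Exit time of the chord `t ↦ x + t v` of the unit disc, `x ∈ ∂D`, `‖v‖ = 1`. -/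
noncomputable def tauD (x v : Fin 2 → ℝ) : ℝ := -2 * dot x v

/-- The mixed ray transform `L_{k,ℓ}` on the Euclidean unit disc. -/
noncomputable def Lray {k l : ℕ} (f : (Fin 2 → ℝ) → Tens k l) (x v : Fin 2 → ℝ) : ℝ :=
  ∫ t in (0:ℝ)..tauD x v,
    ∑ I : Idx k, ∑ J : Idx l, f (x + t • v) I J * vpow v I * vpow (rot v) J

/-- The geodesic (X-ray) transform of a field of symmetric `n`-tensors on the unit disc. -/
noncomputable def Iray {n : ℕ} (h : (Fin 2 → ℝ) → Full n) (x v : Fin 2 → ℝ) : ℝ :=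
  ∫ t in (0:ℝ)..tauD x v, ∑ I : Idx n, h (x + t • v) I * vpow v I


lemma NJ_le {n} (I : Idx n) : NJ I ≤ n := by
  simpa [NJ] using (Finset.card_filter_le (Finset.univ : Finset (Fin n)) _)

lemma fin2_cases (j : Fin 2) : j = 0 ∨ j = 1 := by omega

lemma card_filter_lt (n m : ℕ) (h : m ≤ n) :
    (Finset.univ.filter fun i : Fin n => (i : ℕ) < m).card = m := by
  have he : (Finset.univ.filter fun i : Fin n => (i : ℕ) < m)
      = Finset.univ.map (Fin.castLEEmb h) := by
    ext i
    simp only [Finset.mem_filter, Finset.mem_univ, true_and, Finset.mem_map]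
    constructor
    · intro hi; exact ⟨⟨i, hi⟩, Fin.ext rfl⟩
    · rintro ⟨j, rfl⟩; simpa using j.2
  rw [he, Finset.card_map, Finset.card_univ, Fintype.card_fin]

lemma vpow_canon {n m : ℕ} (h : m ≤ n) (v : Fin 2 → ℝ) :
    vpow v (fun i : Fin n => if (i:ℕ) < m then 0 else 1) = v 0 ^ m * v 1 ^ (n - m) := by
  have h0 : ∀ i : Fin n, v (if (i:ℕ) < m then 0 else 1) = if (i:ℕ) < m then v 0 else v 1 :=
    fun i => apply_ite v _ _ _
  have h2 := Finset.card_filter_add_card_filter_not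
    (s := (Finset.univ : Finset (Fin n))) (p := fun i : Fin n => (i:ℕ) < m)
  have h3 := card_filter_lt n m h
  simp only [Finset.card_univ, Fintype.card_fin] at h2
  simp only [vpow, h0, Finset.prod_ite, Finset.prod_const]
  rw [h3]
  congr 2
  omega

lemma NJ_dswap {n} (J : Idx n) : NJ (dswap ∘ J) = n - NJ J := by
  have h1 : (Finset.univ.filter fun j : Fin n => (dswap ∘ J) j = 0)
      = Finset.univ.filter fun j => ¬ (J j = 0) := by
    apply Finset.filter_congr; intro j _
    rcases fin2_cases (J j) with h | h <;> simp [h, dswap]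
  have h2 := Finset.card_filter_add_card_filter_not
    (s := (Finset.univ : Finset (Fin n))) (p := fun j : Fin n => J j = 0)
  simp only [Finset.card_univ, Fintype.card_fin] at h2
  unfold NJ
  rw [h1]
  omega

lemma neg_one_pow_NJ {n} (J : Idx n) :
    (-1 : ℝ) ^ (NJ J) = ∏ j, (if J j = 0 then (-1:ℝ) else 1) := by
  rw [Finset.prod_ite, Finset.prod_const, Finset.prod_const, one_pow, mul_one, NJ]

lemma sign_vpow {n} (J : Idx n) (w : Fin 2 → ℝ) :
    (-1:ℝ)^(NJ J) * vpow w (dswap ∘ J) = vpow ![-(w 1), w 0] J := by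
  rw [neg_one_pow_NJ, vpow, vpow, ← Finset.prod_mul_distrib]
  refine Finset.prod_congr rfl fun j _ => ?_
  rcases fin2_cases (J j) with h | h <;> simp [h, dswap]
def precomp {n : ℕ} (σ : Equiv.Perm (Fin n)) : Idx n ≃ Idx n :=
  Equiv.arrowCongr σ.symm (Equiv.refl _)

lemma precomp_apply {n : ℕ} (σ : Equiv.Perm (Fin n)) (I : Idx n) :
    precomp σ I = I ∘ σ := by
  funext i; simp [precomp, Equiv.arrowCongr]

lemma vpow_comp {n : ℕ} (v : Fin 2 → ℝ) (I : Idx n) (σ : Equiv.Perm (Fin n)) :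
    vpow v (I ∘ σ) = vpow v I :=
  Equiv.prod_comp σ (fun i => v (I i))

lemma Sym_comp {n} (h : Full n) (I : Idx n) (τ : Equiv.Perm (Fin n)) :
    Sym h (I ∘ τ) = Sym h I := by
  unfold Sym
  congr 1
  rw [← Equiv.sum_comp (Equiv.mulLeft τ) (fun σ : Equiv.Perm (Fin n) => h (I ∘ σ))]
  refine Finset.sum_congr rfl fun σ _ => ?_
  congr 1

lemma sum_Sym_vpow {n : ℕ} (h : Full n) (v : Fin 2 → ℝ) :
    ∑ I : Idx n, Sym h I * vpow v I = ∑ I : Idx n, h I * vpow v I := by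
  have key : ∀ σ : Equiv.Perm (Fin n),
      ∑ I : Idx n, h (I ∘ σ) * vpow v I = ∑ I : Idx n, h I * vpow v I := by
    intro σ
    rw [← Equiv.sum_comp (precomp σ) (fun I : Idx n => h I * vpow v I)]
    refine Finset.sum_congr rfl fun I _ => ?_
    rw [precomp_apply, vpow_comp]
  calc ∑ I : Idx n, Sym h I * vpow v I
      = (Nat.factorial n : ℝ)⁻¹ *
        ∑ σ : Equiv.Perm (Fin n), ∑ I : Idx n, h (I ∘ σ) * vpow v I := by
        simp only [Sym, mul_assoc, Finset.sum_mul, Finset.mul_sum]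
        exact Finset.sum_comm
    _ = (Nat.factorial n : ℝ)⁻¹ *
        ∑ _σ : Equiv.Perm (Fin n), ∑ I : Idx n, h I * vpow v I := by
        rw [Finset.sum_congr rfl fun σ _ => key σ]
    _ = ∑ I : Idx n, h I * vpow v I := by
        rw [Finset.sum_const, Finset.card_univ, Fintype.card_perm, Fintype.card_fin,
          nsmul_eq_mul, ← mul_assoc]
        rw [inv_mul_cancel₀ (by exact_mod_cast Nat.factorial_ne_zero n), one_mul]

lemma E_sum {n m : ℕ} (hm : m ≤ n) (v : Fin 2 → ℝ) :
    ∑ I : Idx n, E n m I * vpow v I = v 0 ^ m * v 1 ^ (n - m) := by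
  unfold E
  rw [sum_Sym_vpow]
  have hiff : ∀ I : Idx n, (∀ i : Fin n, (I i = 0 ↔ (i : ℕ) < m)) ↔
      I = (fun i : Fin n => if (i:ℕ) < m then 0 else 1) := by
    intro I
    constructor
    · intro hI; funext i
      by_cases h : (i:ℕ) < m
      · simp [h, (hI i).2 h]
      · simp only [h, if_false]
        rcases fin2_cases (I i) with h0 | h1
        · exact absurd ((hI i).1 h0) h
        · exact h1
    · rintro rfl i
      by_cases h : (i:ℕ) < m <;> simp [h]
  have : ∀ I : Idx n, (if ∀ i : Fin n, (I i = 0 ↔ (i:ℕ) < m) then (1:ℝ) else 0) * vpow v I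
      = if I = (fun i : Fin n => if (i:ℕ) < m then 0 else 1) then vpow v I else 0 := by
    intro I
    rw [if_congr (hiff I) rfl rfl, ite_mul, one_mul, zero_mul]
  simp only [this]
  rw [Finset.sum_ite_eq' Finset.univ _ (vpow v)]
  simp [vpow_canon hm v]

lemma dswap_invol : Function.Involutive dswap := by intro x; fin_cases x <;> rfl

def dswapEquiv (l : ℕ) : Idx l ≃ Idx l where
  toFun J := dswap ∘ J
  invFun J := dswap ∘ J
  left_inv J := by funext j; exact dswap_invol (J j)
  right_inv J := by funext j; exact dswap_invol (J j)

lemma sum_sign_E (l m : ℕ) (hm : m ≤ l) (w : Fin 2 → ℝ) :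
    ∑ J : Idx l, (-1:ℝ)^(l - NJ J) * E l m (dswap ∘ J) * vpow w J
      = (-(w 1)) ^ m * (w 0) ^ (l - m) := by
  rw [← Equiv.sum_comp (dswapEquiv l)
    (fun J : Idx l => (-1:ℝ)^(l - NJ J) * E l m (dswap ∘ J) * vpow w J)]
  have step : ∀ J : Idx l,
      (-1:ℝ)^(l - NJ (dswapEquiv l J)) * E l m (dswap ∘ (dswapEquiv l J)) * vpow w (dswapEquiv l J)
        = E l m J * vpow ![-(w 1), w 0] J := by
    intro J
    have h1 : dswap ∘ (dswapEquiv l J) = J := by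
      funext j; exact dswap_invol (J j)
    have h2 : l - NJ (dswapEquiv l J) = NJ J := by
      have : NJ ((dswapEquiv l J : Idx l)) = l - NJ J := NJ_dswap J
      have hle := NJ_le J
      rw [this]; omega
    rw [h1, h2, show ((dswapEquiv l) J : Idx l) = dswap ∘ J from rfl]
    calc (-1:ℝ)^(NJ J) * E l m J * vpow w (dswap ∘ J)
        = E l m J * ((-1:ℝ)^(NJ J) * vpow w (dswap ∘ J)) := by ring
      _ = E l m J * vpow ![-(w 1), w 0] J := by rw [sign_vpow]
  rw [Finset.sum_congr rfl fun J _ => step J]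
  have := E_sum (n := l) hm ![-(w 1), w 0]
  simpa using this

def splitEquiv (k l : ℕ) : (Idx k × Idx l) ≃ Idx (k + l) :=
  (Equiv.sumArrowEquivProdArrow _ _ _).symm.trans
    (Equiv.arrowCongr finSumFinEquiv (Equiv.refl _))

lemma sum_toFull {k l : ℕ} (g : Tens k l) (v : Fin 2 → ℝ) :
    ∑ K : Idx (k+l), toFull g K * vpow v K
      = ∑ I : Idx k, ∑ J : Idx l, g I J * (vpow v I * vpow v J) := by
  rw [← Equiv.sum_comp (splitEquiv k l) (fun K : Idx (k+l) => toFull g K * vpow v K),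
    Fintype.sum_prod_type]
  refine Finset.sum_congr rfl fun I _ => Finset.sum_congr rfl fun J _ => ?_
  set K : Idx (k + l) := splitEquiv k l (I, J) with hK
  have hKdef : ∀ i, K i = Sum.elim I J (finSumFinEquiv.symm i) := fun i => rfl
  have hKl : ∀ i : Fin k, K (Fin.castAdd l i) = I i := by
    intro i; rw [hKdef, finSumFinEquiv_symm_apply_castAdd]; rfl
  have hKr : ∀ j : Fin l, K (Fin.natAdd k j) = J j := by
    intro j; rw [hKdef, finSumFinEquiv_symm_apply_natAdd]; rfl
  have h1 : toFull g K = g I J := by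
    unfold toFull
    congr 1
    · funext i; exact hKl i
    · funext j; exact hKr j
  have h2 : vpow v K = vpow v I * vpow v J := by
    unfold vpow
    rw [Fin.prod_univ_add (f := fun i => v (K i))]
    congr 1
    · exact Finset.prod_congr rfl fun i _ => by rw [hKl]
    · exact Finset.prod_congr rfl fun j _ => by rw [hKr]
  rw [h1, h2]

lemma scalar_step (x y A : ℝ) {k l H h : ℕ} (hh : h ≤ H) (hk : H ≤ k) (hl : H ≤ l) :
    A * ((x^h * y^(k-h)) * ((-y)^(l-(H-h)) * x^(H-h)))
      = (-1:ℝ)^(l-H) * ((-1:ℝ)^h * A) * (x^H * y^(k+l-H)) := by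
  have e1 : l - (H - h) = (l - H) + h := by omega
  have e2 : h + (H - h) = H := by omega
  have e3 : (k - h) + ((l - H) + h) = k + l - H := by omega
  calc A * ((x^h * y^(k-h)) * ((-y)^(l-(H-h)) * x^(H-h)))
      = ((-1:ℝ)^((l-H)+h)) * A * ((x^h * x^(H-h)) * (y^(k-h) * y^((l-H)+h))) := by
        rw [e1, neg_pow]; ring
    _ = (-1:ℝ)^(l-H) * ((-1:ℝ)^h * A) * (x^H * y^(k+l-H)) := by
        rw [pow_add (-1:ℝ), ← pow_add x, ← pow_add y, e2, e3]; ring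

lemma pairing (k l H : ℕ) (hk : H ≤ k) (hl : H ≤ l) (a : ℕ → ℝ) (f : Tens k l)
    (hf : ∀ I J, f I J = ∑ h ∈ Finset.range (H + 1), a h * (E k h I * E l (l - (H - h)) J))
    (v : Fin 2 → ℝ) :
    ∑ K : Idx (k + l), Sym (toFull (opA f)) K * vpow v K
      = (-1:ℝ)^(l - H) * (∑ h ∈ Finset.range (H+1), (-1:ℝ)^h * a h)
          * (v 0 ^ H * v 1 ^ (k + l - H)) := by
  rw [sum_Sym_vpow, sum_toFull]
  have expand : ∀ (I : Idx k) (J : Idx l), opA f I J * (vpow v I * vpow v J)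
      = ∑ h ∈ Finset.range (H+1),
          a h * ((E k h I * vpow v I) *
            ((-1:ℝ)^(l - NJ J) * E l (l - (H - h)) (dswap ∘ J) * vpow v J)) := by
    intro I J
    simp only [opA]
    rw [hf I (dswap ∘ J), Finset.mul_sum, Finset.sum_mul]
    exact Finset.sum_congr rfl fun h _ => by ring
  calc ∑ I : Idx k, ∑ J : Idx l, opA f I J * (vpow v I * vpow v J)
      = ∑ I : Idx k, ∑ h ∈ Finset.range (H+1), ∑ J : Idx l,
          a h * ((E k h I * vpow v I) *
            ((-1:ℝ)^(l - NJ J) * E l (l - (H - h)) (dswap ∘ J) * vpow v J)) := by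
        refine Finset.sum_congr rfl fun I _ => ?_
        rw [Finset.sum_congr rfl fun J _ => expand I J]
        exact Finset.sum_comm
    _ = ∑ h ∈ Finset.range (H+1), ∑ I : Idx k, ∑ J : Idx l,
          a h * ((E k h I * vpow v I) *
            ((-1:ℝ)^(l - NJ J) * E l (l - (H - h)) (dswap ∘ J) * vpow v J)) :=
        Finset.sum_comm
    _ = ∑ h ∈ Finset.range (H+1), a h * ((∑ I : Idx k, E k h I * vpow v I) *
          (∑ J : Idx l, (-1:ℝ)^(l - NJ J) * E l (l - (H - h)) (dswap ∘ J) * vpow v J)) := by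
        refine Finset.sum_congr rfl fun h _ => ?_
        rw [Finset.sum_mul_sum, Finset.mul_sum]
        exact Finset.sum_congr rfl fun I _ => by rw [Finset.mul_sum]
    _ = ∑ h ∈ Finset.range (H+1),
          (-1:ℝ)^(l-H) * ((-1:ℝ)^h * a h) * (v 0 ^ H * v 1 ^ (k+l-H)) := by
        refine Finset.sum_congr rfl fun h hh => ?_
        have hhH : h ≤ H := Finset.mem_range_succ_iff.mp hh
        rw [E_sum (le_trans hhH hk) v, sum_sign_E l (l - (H - h)) (Nat.sub_le _ _) v]
        have e4 : l - (l - (H - h)) = H - h := by omega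
        rw [e4]
        exact scalar_step (v 0) (v 1) (a h) hhH hk hl
    _ = (-1:ℝ)^(l - H) * (∑ h ∈ Finset.range (H+1), (-1:ℝ)^h * a h)
          * (v 0 ^ H * v 1 ^ (k + l - H)) := by
        rw [Finset.mul_sum, Finset.sum_mul]

lemma exists_perm_of_NJ_eq {n : ℕ} (I I' : Idx n) (h : NJ I = NJ I') :
    ∃ τ : Equiv.Perm (Fin n), ∀ j, I (τ j) = I' j := by
  have hc1 : Fintype.card {i // I' i = 0} = Fintype.card {i // I i = 0} := by
    rw [Fintype.card_subtype, Fintype.card_subtype]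
    exact h.symm
  have hc2 : Fintype.card {i // ¬ I' i = 0} = Fintype.card {i // ¬ I i = 0} := by
    rw [Fintype.card_subtype_compl, Fintype.card_subtype_compl, hc1]
  let e1 := Fintype.equivOfCardEq hc1
  let e2 := Fintype.equivOfCardEq hc2
  refine ⟨(Equiv.sumCompl (fun i => I' i = 0)).symm.trans
    ((e1.sumCongr e2).trans (Equiv.sumCompl (fun i => I i = 0))), fun j => ?_⟩
  by_cases hj : I' j = 0
  · rw [hj]
    rw [Equiv.trans_apply, Equiv.trans_apply, Equiv.sumCompl_symm_apply_of_pos (p := fun i => I' i = 0) (a := j) hj,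
      Equiv.sumCongr_apply, Sum.map_inl, Equiv.sumCompl_apply_inl]
    exact (e1 ⟨j, hj⟩).2
  · have hj1 : I' j = 1 := by
      rcases fin2_cases (I' j) with h0 | h1
      · exact absurd h0 hj
      · exact h1
    rw [hj1]
    rw [Equiv.trans_apply, Equiv.trans_apply, Equiv.sumCompl_symm_apply_of_neg (p := fun i => I' i = 0) (a := j) hj,
      Equiv.sumCongr_apply, Sum.map_inr, Equiv.sumCompl_apply_inr]
    have hne := (e2 ⟨j, hj⟩).2
    rcases fin2_cases (I ((e2 ⟨j, hj⟩) : Fin n)) with h0 | h1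
    · exact absurd h0 hne
    · exact h1

lemma coeffs_zero_of_sum_eq_zero {n : ℕ} (b : ℕ → ℝ)
    (hb : ∀ x : ℝ, ∑ m ∈ Finset.range (n+1), b m * x ^ m = 0) :
    ∀ m, m ≤ n → b m = 0 := by
  intro m hm
  set p : Polynomial ℝ := ∑ j ∈ Finset.range (n+1), Polynomial.C (b j) * Polynomial.X ^ j
    with hpdef
  have hp0 : p = 0 := by
    apply Polynomial.funext
    intro x
    rw [Polynomial.eval_zero, hpdef, Polynomial.eval_finset_sum]
    simpa using hb x
  have hco := congrArg (fun q : Polynomial ℝ => q.coeff m) hp0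
  simp only [hpdef, Polynomial.finset_sum_coeff, Polynomial.coeff_C_mul,
    Polynomial.coeff_X_pow, mul_ite, mul_one, mul_zero, Polynomial.coeff_zero,
    Polynomial.coeff_zero] at hco
  rw [Finset.sum_ite_eq] at hco
  rwa [if_pos (Finset.mem_range.mpr (Nat.lt_succ_of_le hm))] at hco

lemma vpow_x_one {n : ℕ} (x : ℝ) (I : Idx n) : vpow ![x,1] I = x ^ NJ I := by
  have h0 : ∀ i, (![x,1] : Fin 2 → ℝ) (I i) = if I i = 0 then x else 1 := by
    intro i; rcases fin2_cases (I i) with h | h <;> simp [h]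
  simp only [vpow, h0, Finset.prod_ite, Finset.prod_const, one_pow, mul_one, NJ]

/-- if `f = Σ_{h=0}^H a_h f_{H,h}` with
`f_{H,h} = (⊗^h dx¹ ⊗_s ⊗^(k-h)dx²) ⊗ (⊗^(ℓ-(H-h))dx¹ ⊗_s ⊗^(H-h)dx²)` and
`H ≤ min{k,ℓ}`, then `Sym(Af) = 0` iff `Σ_{h=0}^H (-1)^h a_h = 0`. -/
theorem symA_vanishes_iff_alternating_sum (k l H : ℕ) (hH : H ≤ min k l)
    (a : ℕ → ℝ) (f : Tens k l)
    (hf : ∀ I J, f I J =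
      ∑ h ∈ Finset.range (H + 1), a h * (E k h I * E l (l - (H - h)) J)) :
    (∀ I : Idx (k + l), Sym (toFull (opA f)) I = 0) ↔
      ∑ h ∈ Finset.range (H + 1), (-1 : ℝ) ^ h * a h = 0 := by
  have hk : H ≤ k := le_trans hH (min_le_left _ _)
  have hl : H ≤ l := le_trans hH (min_le_right _ _)
  constructor
  · intro h0
    have hp := pairing k l H hk hl a f hf ![1,1]
    have hL : ∑ K : Idx (k+l), Sym (toFull (opA f)) K * vpow ![1,1] K = 0 :=
      Finset.sum_eq_zero fun K _ => by rw [h0 K, zero_mul]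
    rw [hL] at hp
    simp only [Matrix.cons_val_zero, Matrix.cons_val_one, Matrix.head_cons, one_pow,
      mul_one] at hp
    have hc : ((-1:ℝ))^(l-H) ≠ 0 := pow_ne_zero _ (by norm_num)
    rcases mul_eq_zero.mp hp.symm with h | h
    · exact absurd h hc
    · exact h
  · intro hS I
    have hzero : ∀ x : ℝ, ∑ K : Idx (k+l), Sym (toFull (opA f)) K * x ^ (NJ K) = 0 := by
      intro x
      have hp := pairing k l H hk hl a f hf ![x,1]
      rw [hS] at hp
      simp only [mul_zero, zero_mul] at hp
      rw [← hp]
      exact Finset.sum_congr rfl fun K _ => by rw [vpow_x_one]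
    have hfib : ∀ x : ℝ, ∑ m ∈ Finset.range (k+l+1),
        (∑ K ∈ Finset.univ.filter (fun K : Idx (k+l) => NJ K = m),
          Sym (toFull (opA f)) K) * x ^ m = 0 := by
      intro x
      rw [← hzero x, ← Finset.sum_fiberwise_of_maps_to (g := fun K : Idx (k+l) => NJ K)
        (fun K _ => Finset.mem_range_succ_iff.mpr (NJ_le K))
        (fun K => Sym (toFull (opA f)) K * x ^ NJ K)]
      refine Finset.sum_congr rfl fun m _ => ?_
      rw [Finset.sum_mul]
      refine Finset.sum_congr rfl fun K hK => ?_
      rw [(Finset.mem_filter.mp hK).2]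
    have hbm := coeffs_zero_of_sum_eq_zero
      (fun m => ∑ K ∈ Finset.univ.filter (fun K : Idx (k+l) => NJ K = m),
        Sym (toFull (opA f)) K) hfib (NJ I) (NJ_le I)
    have hconst : ∀ K ∈ Finset.univ.filter (fun K : Idx (k+l) => NJ K = NJ I),
        Sym (toFull (opA f)) K = Sym (toFull (opA f)) I := by
      intro K hK
      obtain ⟨τ, hτ⟩ := exists_perm_of_NJ_eq I K ((Finset.mem_filter.mp hK).2).symm
      have hKI : K = I ∘ τ := funext fun j => (hτ j).symm
      rw [hKI, Sym_comp]
    rw [Finset.sum_congr rfl hconst, Finset.sum_const, nsmul_eq_mul] at hbm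
    have hmem : I ∈ Finset.univ.filter (fun K : Idx (k+l) => NJ K = NJ I) :=
      Finset.mem_filter.mpr ⟨Finset.mem_univ _, rfl⟩
    have hpos : 0 < (Finset.univ.filter (fun K : Idx (k+l) => NJ K = NJ I)).card :=
      Finset.card_pos.mpr ⟨I, hmem⟩
    rcases mul_eq_zero.mp hbm with h | h
    · exact absurd h (Nat.cast_ne_zero.mpr (Nat.pos_iff_ne_zero.mp hpos))
    · exact h


end MRT
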